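/- (Eckart–Young theorem for the t-SVDM.) Let M = c • W with c ∈ ℂ, c ≠ 0 and W ∈ Matrix.unitaryGroup (Fin n) ℂ, let A = U ⋆_M S ⋆_M Vᴴ be a t-SVDM of an m×p×n tensor A, and let k ≤ min(m,p). Let A_k be the t-rank-k truncation. Then ‖A − A_k‖_F² = ∑_{i > k} ∑_{j=1}^{n} |(S j) i i|², and for every m×k×n tensor X and every k×p×n tensor Y, ‖A − A_k‖_F ≤ ‖A − X ⋆_M Y‖_F. -/

import Mathlib

/-!
Since `M = c • W` with `W` unitary, the transform `A ↦ Â` multiplies tensor norms by `‖c‖` and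
turns `⋆_M` into the facewise matrix product, so both claims can be checked on the transform-domain
slices `Â i = Û i * Ŝ i * (V̂ i)ᴴ`. Removing the unitary factors leaves the Eckart–Young problem for
a rectangular diagonal matrix `D` with nonincreasing diagonal norms `σ`. The truncation error is
the diagonal tail `∑_{b ≥ k} σ_b²`. Given `X Y` of inner dimension `k`, pick an isometry `Q` onto
a `(p - k)`-dimensional subspace of `ker Y`. Then `‖D - X Y‖ ≥ ‖(D - X Y) Q‖ = ‖D Q‖`, and
`‖D Q‖² = ∑_b σ_b² t_b` with weights `t_b ∈ [0, 1]` of total mass `p - k`; since `σ` is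
nonincreasing, such a weighted sum is at least the tail.
-/

open scoped BigOperators ComplexConjugate Matrix

noncomputable section

variable {R : Type*}

/-- Mode-3 product of a third-order tensor (encoded by its frontal slices)
with a transform matrix: `(A ×₃ M) i = ∑ j, (M i j) • (A j)`. -/
def mode3 [RCLike R] {ι α β : Type*} [Fintype ι]
    (A : ι → Matrix α β R) (M : Matrix ι ι R) : ι → Matrix α β R :=
  fun i => ∑ j, M i j • A j

/-- Frobenius (entrywise ℓ²) norm of a matrix. -/
def fnorm [RCLike R] {α β : Type*} [Fintype α] [Fintype β] (A : Matrix α β R) : ℝ :=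
  Real.sqrt (∑ a, ∑ b, ‖A a b‖ ^ 2)

/-- Frobenius norm of a tensor: `‖A‖² = ∑ i, ‖A i‖²`. -/
def tnorm [RCLike R] {ι α β : Type*} [Fintype ι] [Fintype α] [Fintype β]
    (A : ι → Matrix α β R) : ℝ :=
  Real.sqrt (∑ i, fnorm (A i) ^ 2)

/-- The ⋆_M product: facewise product in the transform domain, then inverse transform. -/
def tprodM [RCLike R] {ι m p q : Type*} [Fintype ι] [DecidableEq ι] [Fintype p]
    (M : Matrix ι ι R) (A : ι → Matrix m p R) (B : ι → Matrix p q R) :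
    ι → Matrix m q R :=
  mode3 (fun i => mode3 A M i * mode3 B M i) M⁻¹

/-- Conjugate transpose of a tensor under ⋆_M. -/
def tconj [RCLike R] {ι m p : Type*} [Fintype ι] [DecidableEq ι]
    (M : Matrix ι ι R) (A : ι → Matrix m p R) : ι → Matrix p m R :=
  mode3 (fun i => (mode3 A M i)ᴴ) M⁻¹

/-- The identity tensor under ⋆_M. -/
def tId [RCLike R] (m : Type*) [DecidableEq m] {ι : Type*} [Fintype ι] [DecidableEq ι]
    (M : Matrix ι ι R) : ι → Matrix m m R :=
  mode3 (fun _ => (1 : Matrix m m R)) M⁻¹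

/-- A square tensor `Q` is ⋆_M-unitary if `Qᴴ ⋆_M Q = Q ⋆_M Qᴴ = I`. -/
def tUnitary [RCLike R] {ι m : Type*} [Fintype ι] [DecidableEq ι] [Fintype m] [DecidableEq m]
    (M : Matrix ι ι R) (Q : ι → Matrix m m R) : Prop :=
  tprodM M (tconj M Q) Q = tId m M ∧ tprodM M Q (tconj M Q) = tId m M

/-- A t-SVDM of `A`: a factorization `A = U ⋆_M S ⋆_M Vᴴ` with `U`, `V` ⋆_M-unitary and every
transform-domain slice `Ŝ i` diagonal with real, nonnegative, nonincreasing diagonal entries. -/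
def IsTSVDM [RCLike R] {m p n : ℕ} (M : Matrix (Fin n) (Fin n) R)
    (A : Fin n → Matrix (Fin m) (Fin p) R)
    (U : Fin n → Matrix (Fin m) (Fin m) R)
    (S : Fin n → Matrix (Fin m) (Fin p) R)
    (V : Fin n → Matrix (Fin p) (Fin p) R) : Prop :=
  A = tprodM M (tprodM M U S) (tconj M V) ∧
  tUnitary M U ∧ tUnitary M V ∧
  (∀ (i : Fin n) (a : Fin m) (b : Fin p), (a : ℕ) ≠ (b : ℕ) → mode3 S M i a b = 0) ∧
  (∀ (i : Fin n) (a : Fin m) (b : Fin p), (a : ℕ) = (b : ℕ) →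
      ∃ r : ℝ, 0 ≤ r ∧ mode3 S M i a b = (r : R)) ∧
  (∀ (i : Fin n) (a a' : Fin m) (b b' : Fin p), (a : ℕ) = (b : ℕ) → (a' : ℕ) = (b' : ℕ) →
      (a : ℕ) ≤ (a' : ℕ) →
      RCLike.re (mode3 S M i a' b') ≤ RCLike.re (mode3 S M i a b))

/-- Transform-domain slice of a truncation:
(first k columns of Û) * (leading k×k block of Ŝ) * (first k columns of V̂)ᴴ. -/
def truncSlice [RCLike R] {m p : ℕ} (k : ℕ) (Uh : Matrix (Fin m) (Fin m) R)
    (Sh : Matrix (Fin m) (Fin p) R) (Vh : Matrix (Fin p) (Fin p) R) :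
    Matrix (Fin m) (Fin p) R :=
  Matrix.of fun a b =>
    ∑ j : Fin m, ∑ l : Fin p,
      if (j : ℕ) < k ∧ (l : ℕ) < k then Uh a j * Sh j l * star (Vh b l) else 0

/-- The multi-rank-ρ truncation of a t-SVDM (use `ρ = fun _ => k` for the t-rank-k truncation). -/
def truncTensor [RCLike R] {m p n : ℕ} (M : Matrix (Fin n) (Fin n) R)
    (U : Fin n → Matrix (Fin m) (Fin m) R) (S : Fin n → Matrix (Fin m) (Fin p) R)
    (V : Fin n → Matrix (Fin p) (Fin p) R) (ρ : Fin n → ℕ) :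
    Fin n → Matrix (Fin m) (Fin p) R :=
  mode3 (fun i => truncSlice (ρ i) (mode3 U M i) (mode3 S M i) (mode3 V M i)) M⁻¹

/-- The permuted tensor `Aᴾ`: `(Aᴾ c) i j = (A i) c j`. -/
def tperm [RCLike R] {m p n : ℕ} (A : Fin n → Matrix (Fin m) (Fin p) R) :
    Fin m → Matrix (Fin n) (Fin p) R :=
  fun c => Matrix.of fun i j => A i c j

open Matrix

open Matrix

section Frobenius

variable {𝕜 : Type*} [RCLike 𝕜] {α β γ : Type*} [Fintype α] [Fintype β] [Fintype γ]

lemma fnorm_nonneg (X : Matrix α β 𝕜) : 0 ≤ fnorm X := Real.sqrt_nonneg _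

lemma fnorm_sq (X : Matrix α β 𝕜) : fnorm X ^ 2 = ∑ a, ∑ b, ‖X a b‖ ^ 2 :=
  Real.sq_sqrt (by positivity)

lemma fnorm_conjTranspose (X : Matrix α β 𝕜) : fnorm Xᴴ = fnorm X := by
  simp only [fnorm, conjTranspose_apply, norm_star]
  rw [Finset.sum_comm]

lemma fnorm_sq_eq_re_trace (X : Matrix α β 𝕜) : fnorm X ^ 2 = RCLike.re (Xᴴ * X).trace := by
  simp only [fnorm_sq, trace, diag, mul_apply, conjTranspose_apply, RCLike.star_def,
    RCLike.conj_mul, map_sum, ← RCLike.ofReal_pow, RCLike.ofReal_re]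
  exact Finset.sum_comm

lemma fnorm_sq_eq_re_trace_mul_conjTranspose (X : Matrix α β 𝕜) :
    fnorm X ^ 2 = RCLike.re (X * Xᴴ).trace := by
  rw [← fnorm_conjTranspose, fnorm_sq_eq_re_trace, conjTranspose_conjTranspose]

lemma fnorm_mul_of_conjTranspose_mul_self [DecidableEq β] {Q : Matrix α β 𝕜} (hQ : Qᴴ * Q = 1)
    (X : Matrix β γ 𝕜) : fnorm (Q * X) = fnorm X := by
  rw [← sq_eq_sq₀ (fnorm_nonneg _) (fnorm_nonneg _), fnorm_sq_eq_re_trace,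
    fnorm_sq_eq_re_trace, conjTranspose_mul, Matrix.mul_assoc, ← Matrix.mul_assoc Qᴴ, hQ,
    Matrix.one_mul]

lemma fnorm_mul_of_mul_conjTranspose_self [DecidableEq β] {Q : Matrix β α 𝕜} (hQ : Q * Qᴴ = 1)
    (X : Matrix γ β 𝕜) : fnorm (X * Q) = fnorm X := by
  rw [← fnorm_conjTranspose, conjTranspose_mul,
    fnorm_mul_of_conjTranspose_mul_self (by rwa [conjTranspose_conjTranspose]),
    fnorm_conjTranspose]

lemma fnorm_mul_le_of_conjTranspose_mul_self [DecidableEq α] [DecidableEq β] {Q : Matrix α β 𝕜}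
    (hQ : Qᴴ * Q = 1) (C : Matrix γ α 𝕜) : fnorm (C * Q) ≤ fnorm C := by
  set P := Q * Qᴴ
  have hPP : P * P = P := by
    rw [Matrix.mul_assoc, ← Matrix.mul_assoc Qᴴ, hQ, Matrix.one_mul]
  have hP : (1 - P) * (1 - P)ᴴ = 1 - P := by
    rw [conjTranspose_sub, conjTranspose_one, conjTranspose_mul, conjTranspose_conjTranspose,
      Matrix.sub_mul, Matrix.mul_sub, Matrix.mul_sub, hPP]
    simp [P]
  have hsplit : fnorm (C * Q) ^ 2 + fnorm (C * (1 - P)) ^ 2 = fnorm C ^ 2 := by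
    simp only [fnorm_sq_eq_re_trace_mul_conjTranspose, ← map_add, ← trace_add,
      conjTranspose_mul, Matrix.mul_assoc, ← Matrix.mul_assoc (1 - P), hP]
    rw [← Matrix.mul_assoc Q, ← Matrix.mul_add, ← Matrix.add_mul]
    simp [P]
  have := sq_nonneg (fnorm (C * (1 - P)))
  exact (pow_le_pow_iff_left₀ (fnorm_nonneg _) (fnorm_nonneg _) two_ne_zero).mp (by linarith)

end Frobenius

section Isometry

variable {𝕜 : Type*} [RCLike 𝕜]

lemma sum_norm_sq_row_le_one {α β : Type*} [Fintype α] [Fintype β] [DecidableEq α]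
    [DecidableEq β] {Q : Matrix α β 𝕜} (hQ : Qᴴ * Q = 1) (a : α) :
    ∑ b, ‖Q a b‖ ^ 2 ≤ 1 := by
  have h := fnorm_mul_le_of_conjTranspose_mul_self hQ
    ((1 : Matrix α α 𝕜).submatrix (fun _ : Unit => a) id)
  rw [← pow_le_pow_iff_left₀ (fnorm_nonneg _) (fnorm_nonneg _) two_ne_zero, fnorm_sq,
    fnorm_sq] at h
  simpa [Matrix.mul_apply, Matrix.one_apply, apply_ite] using h

lemma sum_sum_norm_sq_eq_of_conjTranspose_mul_self {α : Type*} [Fintype α] {q : ℕ}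
    {Q : Matrix α (Fin q) 𝕜} (hQ : Qᴴ * Q = 1) : ∑ a, ∑ b, ‖Q a b‖ ^ 2 = q := by
  rw [← fnorm_sq, fnorm_sq_eq_re_trace, hQ]
  simp

lemma exists_isometry_mul_eq_zero {k p : ℕ} (Y : Matrix (Fin k) (Fin p) 𝕜) :
    ∃ Q : Matrix (Fin p) (Fin (p - k)) 𝕜, Qᴴ * Q = 1 ∧ Y * Q = 0 := by
  let K := LinearMap.ker (Matrix.toEuclideanLin Y)
  have hK : p - k ≤ Module.finrank 𝕜 K := by
    have := LinearMap.finrank_range_add_finrank_ker (Matrix.toEuclideanLin Y)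
    have := Submodule.finrank_le (LinearMap.range (Matrix.toEuclideanLin Y))
    simp only [finrank_euclideanSpace, Fintype.card_fin] at *
    change _ ≤ Module.finrank 𝕜 (LinearMap.ker _)
    omega
  let b := stdOrthonormalBasis 𝕜 K
  let v : Fin (p - k) → EuclideanSpace 𝕜 (Fin p) := fun i => b (Fin.castLE hK i)
  have hv : Orthonormal 𝕜 v :=
    (b.orthonormal.comp _ (Fin.castLE_injective hK)).comp_linearIsometry K.subtypeₗᵢ
  refine ⟨Matrix.of fun r i => v i r, ?_, ?_⟩
  · ext i i'
    have := orthonormal_iff_ite.mp hv i i'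
    simp only [PiLp.inner_apply, RCLike.inner_apply] at this
    simp [Matrix.mul_apply, Matrix.one_apply, ← this, mul_comm]
  · ext a i
    have := congrArg (fun w : EuclideanSpace 𝕜 (Fin k) => w a)
      (LinearMap.mem_ker.mp (b (Fin.castLE hK i)).2)
    simp only [Matrix.toLpLin_apply] at this
    simpa [Matrix.mul_apply, Matrix.mulVec, dotProduct, v] using this

end Isometry

lemma Fin.card_filter_le_val {p k : ℕ} :
    (Finset.univ.filter fun b : Fin p => k ≤ (b : ℕ)).card = p - k := by
  have h := Finset.card_filter_add_card_filter_not (s := Finset.univ) (fun b : Fin p => (b : ℕ) < k)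
  simp only [Fin.card_filter_val_lt, not_lt, Finset.card_univ, Fintype.card_fin] at h
  omega

lemma sum_tail_le_sum_mul_of_antitone {p k : ℕ} {d t : Fin p → ℝ} (hd : Antitone d)
    (hd0 : ∀ b, 0 ≤ d b) (ht0 : ∀ b, 0 ≤ t b) (ht1 : ∀ b, t b ≤ 1)
    (ht : ∑ b, t b = (p - k : ℕ)) :
    ∑ b : Fin p, (if k ≤ (b : ℕ) then d b else 0) ≤ ∑ b, d b * t b := by
  rcases lt_or_ge k p with hkp | hpk
  · -- compare every term with the threshold value `d k`
    set c := d ⟨k, hkp⟩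
    have hterm : ∀ b : Fin p, (if k ≤ (b : ℕ) then d b else 0)
        ≤ d b * t b + c * ((if k ≤ (b : ℕ) then 1 else 0) - t b) := by
      intro b
      split_ifs with hb
      · have : d b ≤ c := hd (Fin.mk_le_of_le_val hb)
        nlinarith [ht1 b]
      · have : c ≤ d b := hd (Fin.le_of_lt (Fin.lt_def.mpr (not_le.mp hb)))
        nlinarith [ht0 b]
    have hmass : ∑ b : Fin p, ((if k ≤ (b : ℕ) then (1 : ℝ) else 0) - t b) = 0 := by
      rw [Finset.sum_sub_distrib, Finset.sum_boole, ht, Fin.card_filter_le_val, sub_self]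
    calc _ ≤ ∑ b, (d b * t b + c * ((if k ≤ (b : ℕ) then 1 else 0) - t b)) :=
          Finset.sum_le_sum fun b _ => hterm b
      _ = ∑ b, d b * t b := by
          rw [Finset.sum_add_distrib, ← Finset.mul_sum, hmass, mul_zero, add_zero]
  · have hb : ∀ b : Fin p, ¬ k ≤ (b : ℕ) := fun b => by omega
    simp only [hb, if_false, Finset.sum_const_zero]
    exact Finset.sum_nonneg fun b _ => mul_nonneg (hd0 b) (ht0 b)

lemma norm_sum_sq_of_support_subsingleton {ι E : Type*} [Fintype ι] [SeminormedAddCommGroup E]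
    {x : ι → E} (hx : (Function.support x).Subsingleton) :
    ‖∑ i, x i‖ ^ 2 = ∑ i, ‖x i‖ ^ 2 := by
  obtain h | ⟨i, hi⟩ := hx.eq_empty_or_singleton
  · simp [Function.support_eq_empty_iff.mp h]
  · have hj : ∀ j, j ≠ i → x j = 0 := fun j hj =>
      Function.notMem_support.mp (by simp [hi, hj])
    rw [Finset.sum_eq_single i (fun j _ => hj j) (by simp),
      Finset.sum_eq_single i (fun j _ h => by simp [hj j h]) (by simp)]

lemma sum_sum_eq_sum_diag {M : Type*} [AddCommMonoid M] {m p : ℕ} {f : Fin m → Fin p → M}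
    (hf : ∀ (a : Fin m) (b : Fin p), (a : ℕ) ≠ b → f a b = 0) :
    ∑ a, ∑ b, f a b = ∑ i : Fin (min m p),
      f (Fin.castLE (min_le_left m p) i) (Fin.castLE (min_le_right m p) i) := by
  rw [← Fintype.sum_prod_type']
  refine (Fintype.sum_of_injective
    (fun i => (Fin.castLE (min_le_left m p) i, Fin.castLE (min_le_right m p) i))
    (fun i j hij => Fin.ext (by simpa using congrArg (fun x => (x.1 : ℕ)) hij)) _ _ ?_
    (fun _ => rfl)).symm
  rintro ⟨a, b⟩ hab
  refine hf a b fun h => hab ⟨⟨a, lt_min a.2 (h ▸ b.2)⟩, ?_⟩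
  ext <;> simp [h]

section EckartYoung

variable {𝕜 : Type*} [RCLike 𝕜] {m p : ℕ}

def leadBlock (k : ℕ) (D : Matrix (Fin m) (Fin p) 𝕜) : Matrix (Fin m) (Fin p) 𝕜 :=
  Matrix.of fun a b => if (a : ℕ) < k ∧ (b : ℕ) < k then D a b else 0

def tailCols (k : ℕ) (D : Matrix (Fin m) (Fin p) 𝕜) : Matrix (Fin m) (Fin p) 𝕜 :=
  Matrix.of fun a b => if k ≤ (b : ℕ) then D a b else 0

lemma truncSlice_eq (k : ℕ) (U : Matrix (Fin m) (Fin m) 𝕜) (D : Matrix (Fin m) (Fin p) 𝕜)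
    (V : Matrix (Fin p) (Fin p) 𝕜) : truncSlice k U D V = U * leadBlock k D * Vᴴ := by
  ext a b
  simp only [truncSlice, leadBlock, Matrix.of_apply, Matrix.mul_apply, Matrix.conjTranspose_apply,
    Finset.sum_mul, mul_ite, ite_mul, mul_zero, zero_mul]
  rw [Finset.sum_comm]

lemma sub_leadBlock_of_diag {D : Matrix (Fin m) (Fin p) 𝕜}
    (hD : ∀ (a : Fin m) (b : Fin p), (a : ℕ) ≠ b → D a b = 0) (k : ℕ) :
    D - leadBlock k D = tailCols k D := by
  ext a b
  by_cases hab : (a : ℕ) = b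
  · simp only [Matrix.sub_apply, leadBlock, tailCols, Matrix.of_apply, hab, and_self]
    split_ifs <;> first | omega | simp
  · simp [leadBlock, tailCols, hD a b hab]

lemma fnorm_sq_tailCols (k : ℕ) (D : Matrix (Fin m) (Fin p) 𝕜) :
    fnorm (tailCols k D) ^ 2 = ∑ b : Fin p, if k ≤ (b : ℕ) then ∑ a, ‖D a b‖ ^ 2 else 0 := by
  simp only [fnorm_sq, tailCols, Matrix.of_apply, apply_ite (‖·‖ ^ 2), norm_zero]
  rw [Finset.sum_comm]
  exact Finset.sum_congr rfl fun b _ => by split_ifs <;> simp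

lemma fnorm_sq_mul_of_diag {q : ℕ} {D : Matrix (Fin m) (Fin p) 𝕜}
    (hD : ∀ (a : Fin m) (b : Fin p), (a : ℕ) ≠ b → D a b = 0) (Q : Matrix (Fin p) (Fin q) 𝕜) :
    fnorm (D * Q) ^ 2 = ∑ b, (∑ a, ‖D a b‖ ^ 2) * ∑ i, ‖Q b i‖ ^ 2 := by
  have hrow : ∀ a i, ‖(D * Q) a i‖ ^ 2 = ∑ b, ‖D a b‖ ^ 2 * ‖Q b i‖ ^ 2 := by
    intro a i
    rw [Matrix.mul_apply, norm_sum_sq_of_support_subsingleton]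
    · simp only [norm_mul, mul_pow]
    · intro b hb b' hb'
      have h1 : (a : ℕ) = b := by_contra fun h => hb (by simp [hD a b h])
      have h2 : (a : ℕ) = b' := by_contra fun h => hb' (by simp [hD a b' h])
      exact Fin.ext (h1.symm.trans h2)
  simp only [fnorm_sq, hrow, Finset.sum_mul, Finset.mul_sum]
  exact ((Finset.sum_congr rfl fun _ _ => Finset.sum_comm).trans Finset.sum_comm).trans
    (Finset.sum_congr rfl fun _ _ => Finset.sum_comm)

lemma antitone_sum_norm_sq_col_of_diag {D : Matrix (Fin m) (Fin p) 𝕜}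
    (hD : ∀ (a : Fin m) (b : Fin p), (a : ℕ) ≠ b → D a b = 0)
    (hσ : ∀ (a a' : Fin m) (b b' : Fin p), (a : ℕ) = b → (a' : ℕ) = b' → (a : ℕ) ≤ a' →
      ‖D a' b'‖ ≤ ‖D a b‖) :
    Antitone fun b => ∑ a, ‖D a b‖ ^ 2 := by
  have hcol : ∀ b : Fin p,
      ∑ a : Fin m, ‖D a b‖ ^ 2 = if h : (b : ℕ) < m then ‖D ⟨b, h⟩ b‖ ^ 2 else 0 := by
    intro b
    split_ifs with h
    · refine Finset.sum_eq_single (⟨b, h⟩ : Fin m) (fun a _ ha => ?_) (by simp)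
      rw [hD a b fun h' => ha (Fin.ext h'), norm_zero, zero_pow two_ne_zero]
    · exact Finset.sum_eq_zero fun a _ => by rw [hD a b (by omega), norm_zero, zero_pow two_ne_zero]
  intro b b' hbb'
  simp only [hcol]
  split_ifs with h' h
  · exact pow_le_pow_left₀ (norm_nonneg _) (hσ _ _ _ _ rfl rfl hbb') 2
  · exact absurd (lt_of_le_of_lt (Fin.le_def.mp hbb') h') h
  · positivity
  · rfl

theorem fnorm_tailCols_le_fnorm_sub_mul {k : ℕ} {D : Matrix (Fin m) (Fin p) 𝕜}
    (hD : ∀ (a : Fin m) (b : Fin p), (a : ℕ) ≠ b → D a b = 0)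
    (hσ : ∀ (a a' : Fin m) (b b' : Fin p), (a : ℕ) = b → (a' : ℕ) = b' → (a : ℕ) ≤ a' →
      ‖D a' b'‖ ≤ ‖D a b‖)
    (X : Matrix (Fin m) (Fin k) 𝕜) (Y : Matrix (Fin k) (Fin p) 𝕜) :
    fnorm (tailCols k D) ≤ fnorm (D - X * Y) := by
  -- `D - X Y` and `D` agree on the kernel of `Y`, which has dimension at least `p - k`
  obtain ⟨Q, hQ, hYQ⟩ := exists_isometry_mul_eq_zero Y
  have htail : fnorm (tailCols k D) ^ 2 ≤ fnorm (D * Q) ^ 2 := by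
    rw [fnorm_sq_tailCols, fnorm_sq_mul_of_diag hD]
    exact sum_tail_le_sum_mul_of_antitone (antitone_sum_norm_sq_col_of_diag hD hσ)
      (fun _ => by positivity) (fun _ => by positivity) (sum_norm_sq_row_le_one hQ)
      (sum_sum_norm_sq_eq_of_conjTranspose_mul_self hQ)
  calc fnorm (tailCols k D)
      ≤ fnorm (D * Q) :=
        (pow_le_pow_iff_left₀ (fnorm_nonneg _) (fnorm_nonneg _) two_ne_zero).mp htail
    _ = fnorm ((D - X * Y) * Q) := by
        rw [Matrix.sub_mul, Matrix.mul_assoc, hYQ, Matrix.mul_zero, sub_zero]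
    _ ≤ fnorm (D - X * Y) := fnorm_mul_le_of_conjTranspose_mul_self hQ _

lemma fnorm_unitary_mul_mul_conjTranspose {U : Matrix (Fin m) (Fin m) 𝕜}
    {V : Matrix (Fin p) (Fin p) 𝕜} (hU : U ∈ Matrix.unitaryGroup (Fin m) 𝕜)
    (hV : V ∈ Matrix.unitaryGroup (Fin p) 𝕜) (D : Matrix (Fin m) (Fin p) 𝕜) :
    fnorm (U * D * Vᴴ) = fnorm D := by
  rw [fnorm_mul_of_mul_conjTranspose_self
      (by rw [conjTranspose_conjTranspose]; exact Matrix.mem_unitaryGroup_iff'.mp hV),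
    fnorm_mul_of_conjTranspose_mul_self (Matrix.mem_unitaryGroup_iff'.mp hU)]

lemma fnorm_sub_truncSlice {k : ℕ} {U : Matrix (Fin m) (Fin m) 𝕜} {D : Matrix (Fin m) (Fin p) 𝕜}
    {V : Matrix (Fin p) (Fin p) 𝕜} (hU : U ∈ Matrix.unitaryGroup (Fin m) 𝕜)
    (hV : V ∈ Matrix.unitaryGroup (Fin p) 𝕜)
    (hD : ∀ (a : Fin m) (b : Fin p), (a : ℕ) ≠ b → D a b = 0) :
    fnorm (U * D * Vᴴ - truncSlice k U D V) = fnorm (tailCols k D) := by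
  rw [truncSlice_eq, ← Matrix.sub_mul, ← Matrix.mul_sub, fnorm_unitary_mul_mul_conjTranspose hU hV,
    sub_leadBlock_of_diag hD]

theorem fnorm_tailCols_le_fnorm_unitary_mul_mul_conjTranspose_sub_mul {k : ℕ}
    {U : Matrix (Fin m) (Fin m) 𝕜} {D : Matrix (Fin m) (Fin p) 𝕜} {V : Matrix (Fin p) (Fin p) 𝕜}
    (hU : U ∈ Matrix.unitaryGroup (Fin m) 𝕜) (hV : V ∈ Matrix.unitaryGroup (Fin p) 𝕜)
    (hD : ∀ (a : Fin m) (b : Fin p), (a : ℕ) ≠ b → D a b = 0)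
    (hσ : ∀ (a a' : Fin m) (b b' : Fin p), (a : ℕ) = b → (a' : ℕ) = b' → (a : ℕ) ≤ a' →
      ‖D a' b'‖ ≤ ‖D a b‖)
    (X : Matrix (Fin m) (Fin k) 𝕜) (Y : Matrix (Fin k) (Fin p) 𝕜) :
    fnorm (tailCols k D) ≤ fnorm (U * D * Vᴴ - X * Y) := by
  have hUU : U * Uᴴ = 1 := Matrix.mem_unitaryGroup_iff.mp hU
  have hVV : V * Vᴴ = 1 := Matrix.mem_unitaryGroup_iff.mp hV
  have : U * D * Vᴴ - X * Y = U * (D - (Uᴴ * X) * (Y * V)) * Vᴴ := by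
    simp only [Matrix.mul_sub, Matrix.sub_mul, ← Matrix.mul_assoc, hUU, Matrix.one_mul]
    rw [Matrix.mul_assoc (X * Y), hVV, Matrix.mul_one]
  rw [this, fnorm_unitary_mul_mul_conjTranspose hU hV]
  exact fnorm_tailCols_le_fnorm_sub_mul hD hσ _ _

end EckartYoung

section Transform

variable {𝕜 : Type*} [RCLike 𝕜] {ι α β γ : Type*} [Fintype ι]

lemma mode3_mode3 (A : ι → Matrix α β 𝕜) (M N : Matrix ι ι 𝕜) :
    mode3 (mode3 A M) N = mode3 A (N * M) := by
  funext i
  simp only [mode3, Finset.smul_sum, smul_smul, Matrix.mul_apply, Finset.sum_smul]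
  exact Finset.sum_comm

lemma mode3_sub (A B : ι → Matrix α β 𝕜) (M : Matrix ι ι 𝕜) (i : ι) :
    mode3 (fun j => A j - B j) M i = mode3 A M i - mode3 B M i := by
  simp [mode3, smul_sub, Finset.sum_sub_distrib]

lemma mode3_apply_eq_zero {A : ι → Matrix α β 𝕜} {a : α} {b : β} (h : ∀ j, A j a b = 0)
    (M : Matrix ι ι 𝕜) (i : ι) : mode3 A M i a b = 0 := by
  simp [mode3, Matrix.sum_apply, h]

lemma mode3_tailCols {m p : ℕ} (k : ℕ) (A : ι → Matrix (Fin m) (Fin p) 𝕜) (M : Matrix ι ι 𝕜)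
    (i : ι) : mode3 (fun j => tailCols k (A j)) M i = tailCols k (mode3 A M i) := by
  ext a b
  simp only [mode3, tailCols, Matrix.sum_apply, Matrix.smul_apply, Matrix.of_apply]
  split_ifs <;> simp

variable [DecidableEq ι] {M : Matrix ι ι 𝕜}

lemma mode3_one (A : ι → Matrix α β 𝕜) : mode3 A 1 = A := by
  funext i
  simp [mode3, Matrix.one_apply]

lemma mode3_mode3_inv (hM : IsUnit M.det) (A : ι → Matrix α β 𝕜) : mode3 (mode3 A M⁻¹) M = A := by
  rw [mode3_mode3, Matrix.mul_nonsing_inv M hM, mode3_one]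

lemma mode3_inv_mode3 (hM : IsUnit M.det) (A : ι → Matrix α β 𝕜) : mode3 (mode3 A M) M⁻¹ = A := by
  rw [mode3_mode3, Matrix.nonsing_inv_mul M hM, mode3_one]

lemma mode3_tconj (hM : IsUnit M.det) (A : ι → Matrix α β 𝕜) (i : ι) :
    mode3 (tconj M A) M i = (mode3 A M i)ᴴ :=
  congrFun (mode3_mode3_inv hM _) i

lemma mode3_truncTensor {n m p : ℕ} {M : Matrix (Fin n) (Fin n) 𝕜} (hM : IsUnit M.det)
    (U : Fin n → Matrix (Fin m) (Fin m) 𝕜) (S : Fin n → Matrix (Fin m) (Fin p) 𝕜)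
    (V : Fin n → Matrix (Fin p) (Fin p) 𝕜) (ρ : Fin n → ℕ) (i : Fin n) :
    mode3 (truncTensor M U S V ρ) M i
      = truncSlice (ρ i) (mode3 U M i) (mode3 S M i) (mode3 V M i) :=
  congrFun (mode3_mode3_inv hM _) i

lemma isUnit_det_smul_of_mem_unitaryGroup {W : Matrix ι ι 𝕜}
    (hW : W ∈ Matrix.unitaryGroup ι 𝕜) {c : 𝕜} (hc : c ≠ 0) : IsUnit (c • W).det :=
  Matrix.isUnit_det_of_right_inverse (B := c⁻¹ • star W) <| by
    rw [Matrix.smul_mul, Matrix.mul_smul, smul_smul, mul_inv_cancel₀ hc, one_smul,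
      Matrix.mem_unitaryGroup_iff.mp hW]

variable [Fintype β]

lemma mode3_tprodM (hM : IsUnit M.det) (A : ι → Matrix α β 𝕜) (B : ι → Matrix β γ 𝕜) (i : ι) :
    mode3 (tprodM M A B) M i = mode3 A M i * mode3 B M i :=
  congrFun (mode3_mode3_inv hM _) i

lemma tUnitary.mode3_mem_unitaryGroup [DecidableEq β] (hM : IsUnit M.det)
    {Q : ι → Matrix β β 𝕜} (hQ : tUnitary M Q) (i : ι) :
    mode3 Q M i ∈ Matrix.unitaryGroup β 𝕜 := by
  have hId : mode3 (tId β M) M i = 1 := congrFun (mode3_mode3_inv hM _) i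
  have h := congrArg (fun T => mode3 T M i) hQ.1
  simp only [mode3_tprodM hM, mode3_tconj hM, hId] at h
  exact Matrix.mem_unitaryGroup_iff'.mpr h

end Transform

section TensorNorm

variable {𝕜 : Type*} [RCLike 𝕜] {ι α β : Type*} [Fintype ι]

def unfold3 (A : ι → Matrix α β 𝕜) : Matrix ι (α × β) 𝕜 :=
  Matrix.of fun j ab => A j ab.1 ab.2

lemma unfold3_mode3 (A : ι → Matrix α β 𝕜) (M : Matrix ι ι 𝕜) :
    unfold3 (mode3 A M) = M * unfold3 A := by
  ext i ⟨a, b⟩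
  simp [unfold3, mode3, Matrix.mul_apply, Matrix.sum_apply]

variable [Fintype α] [Fintype β]

lemma tnorm_eq_fnorm_unfold3 (A : ι → Matrix α β 𝕜) : tnorm A = fnorm (unfold3 A) := by
  simp only [tnorm, fnorm_sq]
  simp [fnorm, unfold3, Fintype.sum_prod_type]

lemma fnorm_smul (c : 𝕜) (X : Matrix α β 𝕜) : fnorm (c • X) = ‖c‖ * fnorm X := by
  simp only [fnorm, Matrix.smul_apply, norm_smul, mul_pow, ← Finset.mul_sum]
  rw [Real.sqrt_mul (by positivity), Real.sqrt_sq (norm_nonneg c)]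

lemma tnorm_mode3_smul_of_mem_unitaryGroup [DecidableEq ι] {W : Matrix ι ι 𝕜}
    (hW : W ∈ Matrix.unitaryGroup ι 𝕜) (c : 𝕜) (A : ι → Matrix α β 𝕜) :
    tnorm (mode3 A (c • W)) = ‖c‖ * tnorm A := by
  rw [tnorm_eq_fnorm_unfold3, tnorm_eq_fnorm_unfold3, unfold3_mode3, Matrix.smul_mul, fnorm_smul,
    fnorm_mul_of_conjTranspose_mul_self (Matrix.mem_unitaryGroup_iff'.mp hW)]

lemma tnorm_le_tnorm {A B : ι → Matrix α β 𝕜} (h : ∀ i, fnorm (A i) ≤ fnorm (B i)) :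
    tnorm A ≤ tnorm B :=
  Real.sqrt_le_sqrt (Finset.sum_le_sum fun i _ => pow_le_pow_left₀ (fnorm_nonneg _) (h i) 2)

lemma tnorm_le_tnorm_of_mode3_smul [DecidableEq ι] {W : Matrix ι ι 𝕜}
    (hW : W ∈ Matrix.unitaryGroup ι 𝕜) {c : 𝕜} (hc : c ≠ 0) {A B : ι → Matrix α β 𝕜}
    (h : ∀ i, fnorm (mode3 A (c • W) i) ≤ fnorm (mode3 B (c • W) i)) : tnorm A ≤ tnorm B := by
  have := tnorm_le_tnorm h
  rw [tnorm_mode3_smul_of_mem_unitaryGroup hW, tnorm_mode3_smul_of_mem_unitaryGroup hW] at this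
  exact le_of_mul_le_mul_left this (norm_pos_iff.mpr hc)

lemma tnorm_eq_tnorm_of_mode3_smul [DecidableEq ι] {W : Matrix ι ι 𝕜}
    (hW : W ∈ Matrix.unitaryGroup ι 𝕜) {c : 𝕜} (hc : c ≠ 0) {A B : ι → Matrix α β 𝕜}
    (h : ∀ i, fnorm (mode3 A (c • W) i) = fnorm (mode3 B (c • W) i)) : tnorm A = tnorm B :=
  le_antisymm (tnorm_le_tnorm_of_mode3_smul hW hc fun i => (h i).le)
    (tnorm_le_tnorm_of_mode3_smul hW hc fun i => (h i).ge)

end TensorNorm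

lemma tnorm_sq_tailCols_of_diag {𝕜 : Type*} [RCLike 𝕜] {n m p : ℕ} (k : ℕ)
    {S : Fin n → Matrix (Fin m) (Fin p) 𝕜}
    (hS : ∀ j (a : Fin m) (b : Fin p), (a : ℕ) ≠ b → S j a b = 0) :
    tnorm (fun j => tailCols k (S j)) ^ 2 =
      ∑ i : Fin (min m p), if k ≤ (i : ℕ) then
        ∑ j, ‖S j (Fin.castLE (min_le_left m p) i) (Fin.castLE (min_le_right m p) i)‖ ^ 2
      else 0 := by
  have hdiag : ∀ j, fnorm (tailCols k (S j)) ^ 2 = ∑ i : Fin (min m p), if k ≤ (i : ℕ) then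
      ‖S j (Fin.castLE (min_le_left m p) i) (Fin.castLE (min_le_right m p) i)‖ ^ 2 else 0 := by
    intro j
    rw [fnorm_sq, sum_sum_eq_sum_diag fun a b hab => by simp [tailCols, hS j a b hab]]
    simp [tailCols, apply_ite]
  rw [tnorm, Real.sq_sqrt (by positivity)]
  simp only [hdiag]
  rw [Finset.sum_comm]
  simp

section TSVDM

variable {𝕜 : Type*} [RCLike 𝕜] {n m p : ℕ} {M : Matrix (Fin n) (Fin n) 𝕜}
  {A : Fin n → Matrix (Fin m) (Fin p) 𝕜} {U : Fin n → Matrix (Fin m) (Fin m) 𝕜}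
  {S : Fin n → Matrix (Fin m) (Fin p) 𝕜} {V : Fin n → Matrix (Fin p) (Fin p) 𝕜}

lemma IsTSVDM.mode3_eq (h : IsTSVDM M A U S V) (hM : IsUnit M.det) (i : Fin n) :
    mode3 A M i = mode3 U M i * mode3 S M i * (mode3 V M i)ᴴ := by
  rw [h.1, mode3_tprodM hM, mode3_tprodM hM, mode3_tconj hM]

lemma IsTSVDM.norm_mode3_le (h : IsTSVDM M A U S V) (i : Fin n) (a a' : Fin m) (b b' : Fin p)
    (hab : (a : ℕ) = b) (hab' : (a' : ℕ) = b') (haa' : (a : ℕ) ≤ a') :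
    ‖mode3 S M i a' b'‖ ≤ ‖mode3 S M i a b‖ := by
  obtain ⟨-, -, -, -, hreal, hmono⟩ := h
  obtain ⟨r, hr, hrS⟩ := hreal i a b hab
  obtain ⟨r', hr', hrS'⟩ := hreal i a' b' hab'
  have := hmono i a a' b b' hab hab' haa'
  rw [hrS, hrS'] at this ⊢
  simpa [abs_of_nonneg hr, abs_of_nonneg hr'] using this

lemma IsTSVDM.apply_eq_zero (h : IsTSVDM M A U S V) (hM : IsUnit M.det) (j : Fin n) (a : Fin m)
    (b : Fin p) (hab : (a : ℕ) ≠ b) : S j a b = 0 := by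
  rw [← mode3_inv_mode3 hM S]
  exact mode3_apply_eq_zero (fun i => h.2.2.2.1 i a b hab) _ _

end TSVDM

theorem stmt5_general {n m p : ℕ}
    (W : Matrix (Fin n) (Fin n) ℂ) (hW : W ∈ Matrix.unitaryGroup (Fin n) ℂ)
    (c : ℂ) (hc : c ≠ 0)
    (A : Fin n → Matrix (Fin m) (Fin p) ℂ)
    (U : Fin n → Matrix (Fin m) (Fin m) ℂ)
    (S : Fin n → Matrix (Fin m) (Fin p) ℂ)
    (V : Fin n → Matrix (Fin p) (Fin p) ℂ)
    (h : IsTSVDM (c • W) A U S V)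
    (k : ℕ) :
    (tnorm (fun i => A i - truncTensor (c • W) U S V (fun _ => k) i) ^ 2 =
      ∑ i : Fin (min m p),
        if k ≤ (i : ℕ) then
          (∑ j : Fin n,
            ‖S j (Fin.castLE (min_le_left m p) i) (Fin.castLE (min_le_right m p) i)‖ ^ 2)
        else 0) ∧
    ∀ (X : Fin n → Matrix (Fin m) (Fin k) ℂ) (Y : Fin n → Matrix (Fin k) (Fin p) ℂ),
      tnorm (fun i => A i - truncTensor (c • W) U S V (fun _ => k) i) ≤
        tnorm (fun i => A i - tprodM (c • W) X Y i) := by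
  have hM := isUnit_det_smul_of_mem_unitaryGroup hW hc
  have hU := h.2.1.mode3_mem_unitaryGroup hM
  have hV := h.2.2.1.mode3_mem_unitaryGroup hM
  have hdiag := h.2.2.2.1
  have herr : tnorm (fun i => A i - truncTensor (c • W) U S V (fun _ => k) i)
      = tnorm (fun j => tailCols k (S j)) := by
    refine tnorm_eq_tnorm_of_mode3_smul hW hc fun i => ?_
    rw [mode3_sub, mode3_tailCols, h.mode3_eq hM, mode3_truncTensor hM]
    exact fnorm_sub_truncSlice (hU i) (hV i) (hdiag i)
  refine ⟨by rw [herr, tnorm_sq_tailCols_of_diag k (h.apply_eq_zero hM)], fun X Y => ?_⟩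
  rw [herr]
  refine tnorm_le_tnorm_of_mode3_smul hW hc fun i => ?_
  rw [mode3_tailCols, mode3_sub, h.mode3_eq hM, mode3_tprodM hM]
  exact fnorm_tailCols_le_fnorm_unitary_mul_mul_conjTranspose_sub_mul (hU i) (hV i) (hdiag i)
    (h.norm_mode3_le i) _ _

/-- Eckart–Young for the t-SVDM: the t-rank-k truncation `A_k` satisfies
`‖A − A_k‖² = ∑_{i>k} ∑_j |(S j) i i|²` and is optimal among all products `X ⋆_M Y`
with inner tensor dimension `k`. -/
theorem stmt5 {n m p : ℕ}
    (W : Matrix (Fin n) (Fin n) ℂ) (hW : W ∈ Matrix.unitaryGroup (Fin n) ℂ)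
    (c : ℂ) (hc : c ≠ 0)
    (A : Fin n → Matrix (Fin m) (Fin p) ℂ)
    (U : Fin n → Matrix (Fin m) (Fin m) ℂ)
    (S : Fin n → Matrix (Fin m) (Fin p) ℂ)
    (V : Fin n → Matrix (Fin p) (Fin p) ℂ)
    (h : IsTSVDM (c • W) A U S V)
    (k : ℕ) (hk : k ≤ min m p) :
    (tnorm (fun i => A i - truncTensor (c • W) U S V (fun _ => k) i) ^ 2 =
      ∑ i : Fin (min m p),
        if k ≤ (i : ℕ) then
          (∑ j : Fin n,
            ‖S j (Fin.castLE (min_le_left m p) i) (Fin.castLE (min_le_right m p) i)‖ ^ 2)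
        else 0) ∧
    ∀ (X : Fin n → Matrix (Fin m) (Fin k) ℂ) (Y : Fin n → Matrix (Fin k) (Fin p) ℂ),
      tnorm (fun i => A i - truncTensor (c • W) U S V (fun _ => k) i) ≤
        tnorm (fun i => A i - tprodM (c • W) X Y i) :=
  stmt5_general W hW c hc A U S V h k
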